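/- There is a constant C = C(H,T) such that for all (ε,δ) ∈ (0,1)² and all (s,t) ∈ Δ_T: |(1/ε) η₁₂(ε,s,t)| · |(1/δ) η₂₂(δ,s,t)| · (t−s)^{2H} ≤ C ( t^{−1} + s^{H−1}(t−s)^{H−1} + s^{1−2H}(t^{2H−2} + 1) + (t−s)^{2H−2} ). Moreover, the function (s,t) ↦ t^{−1} + s^{H−1}(t−s)^{H−1} + s^{1−2H}(t^{2H−2} + 1) + (t−s)^{2H−2} belongs to L^q(Δ_T) for every 1 ≤ q < min{1/(2H−1), 1/(2−2H)}. -/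

import Mathlib

open Real Set MeasureTheory

noncomputable section

/-- `ϑ₁(x) = |1+x|^{2H} − 1 − |x|^{2H}`. -/
def theta1 (H x : ℝ) : ℝ := |1 + x| ^ (2*H) - 1 - |x| ^ (2*H)

/-- `φ(s,t) = (1/2)(t^{2H} − s^{2H} − (t−s)^{2H})`. -/
def phiFn (H s t : ℝ) : ℝ := (t ^ (2*H) - s ^ (2*H) - (t - s) ^ (2*H)) / 2

/-- `R(s,t) = (1/2)(t^{2H} + s^{2H} − (t−s)^{2H})`. -/
def Rcov (H s t : ℝ) : ℝ := (t ^ (2*H) + s ^ (2*H) - (t - s) ^ (2*H)) / 2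

/-- `Θ_{s,t} = s^{2H} t^{2H} − R(s,t)²`. -/
def ThetaFn (H s t : ℝ) : ℝ := s ^ (2*H) * t ^ (2*H) - (Rcov H s t)^2

/-- `d(δ,s,t) = (t^{2H}/2) ϑ₁(δ/t) − ((t−s)^{2H}/2) ϑ₁(δ/(t−s))`. -/
def dFn (H δ s t : ℝ) : ℝ :=
  t ^ (2*H) / 2 * theta1 H (δ / t) - (t - s) ^ (2*H) / 2 * theta1 H (δ / (t - s))

/-- `η₁₁(ε,s,t)`. -/
def eta11 (H ε s t : ℝ) : ℝ :=
  (ThetaFn H s t)⁻¹ * (s ^ (2*H) / 2 * theta1 H (ε/s) * (t-s) ^ (2*H)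
    + (t-s) ^ (2*H) / 2 * phiFn H s t * theta1 H (-ε/(t-s)))

/-- `η₁₂(ε,s,t)`. -/
def eta12 (H ε s t : ℝ) : ℝ :=
  (ThetaFn H s t)⁻¹ * (-(s ^ (2*H) / 2 * theta1 H (ε/s) * phiFn H s t)
    - (t-s) ^ (2*H) / 2 * s ^ (2*H) * theta1 H (-ε/(t-s)))

/-- `η₂₁(δ,s,t)`. -/
def eta21 (H δ s t : ℝ) : ℝ :=
  (ThetaFn H s t)⁻¹ * (dFn H δ s t * (t-s) ^ (2*H)
    - phiFn H s t * ((t-s) ^ (2*H) / 2) * theta1 H (δ/(t-s)))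

/-- `η₂₂(δ,s,t)`. -/
def eta22 (H δ s t : ℝ) : ℝ :=
  (ThetaFn H s t)⁻¹ * (-(dFn H δ s t * phiFn H s t)
    + s ^ (2*H) * ((t-s) ^ (2*H) / 2) * theta1 H (δ/(t-s)))

end

/-- Upper mean-value bound: `B^p - A^p ≤ p * B^(p-1) * (B-A)` for `0 ≤ A ≤ B`, `1 ≤ p`. -/
lemma rpow_diff_le_upper {p A B : ℝ} (hp : 1 ≤ p) (hA : 0 ≤ A) (hAB : A ≤ B) :
    B ^ p - A ^ p ≤ p * B ^ (p - 1) * (B - A) := by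
  rcases eq_or_lt_of_le (hA.trans hAB) with hB | hB
  · have hA0 : A = 0 := le_antisymm (hAB.trans_eq hB.symm) hA
    have hp0 : p ≠ 0 := by linarith
    simp [← hB, hA0, Real.zero_rpow hp0]
  · have hB0 : (0:ℝ) < B := hB
    have hs : (-1:ℝ) ≤ A / B - 1 := by
      have : 0 ≤ A / B := div_nonneg hA hB0.le
      linarith
    have hber := one_add_mul_self_le_rpow_one_add hs hp
    rw [add_sub_cancel] at hber
    have hAB' : (A / B) ^ p = A ^ p / B ^ p := Real.div_rpow hA hB0.le p
    rw [hAB'] at hber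
    have hBp : (0:ℝ) < B ^ p := Real.rpow_pos_of_pos hB0 p
    have h2 : (1 + p * (A / B - 1)) * B ^ p ≤ A ^ p := by
      calc (1 + p * (A / B - 1)) * B ^ p ≤ (A ^ p / B ^ p) * B ^ p := by
            apply mul_le_mul_of_nonneg_right hber hBp.le
        _ = A ^ p := by field_simp
    have hBp1 : B ^ (p - 1) = B ^ p / B := Real.rpow_sub_one hB0.ne' p
    rw [hBp1]
    have hexp : (1 + p * (A / B - 1)) * B ^ p = B ^ p + p * (B ^ p / B) * (A - B) := by
      field_simp
    nlinarith [h2, hexp]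

/-- Lower mean-value bound: `p * A^(p-1) * (B-A) ≤ B^p - A^p` for `0 < A ≤ B`, `1 ≤ p`. -/
lemma rpow_diff_le_lower {p A B : ℝ} (hp : 1 ≤ p) (hA : 0 < A) (hAB : A ≤ B) :
    p * A ^ (p - 1) * (B - A) ≤ B ^ p - A ^ p := by
  have hs : (-1:ℝ) ≤ B / A - 1 := by
    have : 0 ≤ B / A := div_nonneg (hA.le.trans hAB) hA.le
    linarith
  have hber := one_add_mul_self_le_rpow_one_add hs hp
  rw [add_sub_cancel] at hber
  rw [Real.div_rpow (hA.le.trans hAB) hA.le p] at hber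
  have hAp : (0:ℝ) < A ^ p := Real.rpow_pos_of_pos hA p
  have h2 : (1 + p * (B / A - 1)) * A ^ p ≤ B ^ p := by
    calc (1 + p * (B / A - 1)) * A ^ p ≤ (B ^ p / A ^ p) * A ^ p := by
          apply mul_le_mul_of_nonneg_right hber hAp.le
      _ = B ^ p := by field_simp
  have hAp1 : A ^ (p - 1) = A ^ p / A := Real.rpow_sub_one hA.ne' p
  rw [hAp1]
  have hexp : (1 + p * (B / A - 1)) * A ^ p = A ^ p + p * (A ^ p / A) * (B - A) := by
    field_simp
  nlinarith [h2, hexp]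

/-- Superadditivity of `x ↦ x^p` for `1 ≤ p`. -/
lemma rpow_superadd {p x y : ℝ} (hp : 1 ≤ p) (hx : 0 ≤ x) (hy : 0 ≤ y) :
    x ^ p + y ^ p ≤ (x + y) ^ p := by
  have key : ∀ a b : ℝ, 0 ≤ a → 0 ≤ b → b ≤ a → a ^ p + b ^ p ≤ (a + b) ^ p := by
    intro a b ha hb hba
    rcases eq_or_lt_of_le hb with hb0 | hb0
    · have hp0 : p ≠ 0 := by linarith
      simp [← hb0, Real.zero_rpow hp0]
    · have h1 : p * a ^ (p-1) * ((a+b) - a) ≤ (a+b) ^ p - a ^ p :=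
        rpow_diff_le_lower hp (hb0.trans_le hba) (by linarith)
      have h2 : b ^ (p-1) ≤ a ^ (p-1) :=
        Real.rpow_le_rpow hb hba (by linarith)
      have h3 : b ^ p = b ^ (p-1) * b := by
        rw [Real.rpow_sub_one hb0.ne' p]; field_simp
      have h4 : b ^ p ≤ p * a ^ (p-1) * b := by
        rw [h3]
        have : b ^ (p-1) * b ≤ a ^ (p-1) * b := mul_le_mul_of_nonneg_right h2 hb
        have hpa : a ^ (p-1) * b ≤ p * a ^ (p-1) * b := by
          have h5 : 0 ≤ a ^ (p-1) * b := mul_nonneg (Real.rpow_nonneg ha _) hb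
          nlinarith
        linarith
      nlinarith [h1, h4]
  rcases le_total y x with h | h
  · exact key x y hx hy h
  · have := key y x hy hx h
    rw [add_comm y x] at this
    linarith

lemma theta1_abs_le {H : ℝ} (hH : H ∈ Set.Ioo (1/2 : ℝ) 1) (x : ℝ) :
    |theta1 H x| ≤ 4 * |x| := by
  obtain ⟨hH1, hH2⟩ := hH
  have hq1 : (1:ℝ) ≤ 2*H := by linarith
  have hq2 : (2:ℝ)*H ≤ 2 := by linarith
  rw [abs_le]
  rcases le_or_gt 0 x with hx | hx
  · have h1x : |1 + x| = 1 + x := abs_of_nonneg (by linarith)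
    have hxx : |x| = x := abs_of_nonneg hx
    unfold theta1
    rw [h1x, hxx]
    have hxq : (0:ℝ) ≤ x ^ (2*H) := Real.rpow_nonneg hx _
    have hlow : 1 + x ^ (2*H) ≤ (1 + x) ^ (2*H) := by
      have := rpow_superadd hq1 zero_le_one hx
      rwa [Real.one_rpow] at this
    constructor
    · linarith
    · rcases le_or_gt x 1 with hx1 | hx1
      · have h1 : (1+x) ^ (2*H) - 1 ^ (2*H) ≤ 2*H * (1+x) ^ (2*H-1) * ((1+x) - 1) :=
          rpow_diff_le_upper hq1 zero_le_one (by linarith)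
        rw [Real.one_rpow, add_sub_cancel_left] at h1
        have h2 : (1+x) ^ (2*H-1) ≤ (1+x) ^ (1:ℝ) :=
          Real.rpow_le_rpow_of_exponent_le (by linarith) (by linarith)
        rw [Real.rpow_one] at h2
        have h3 : (0:ℝ) ≤ (1+x) ^ (2*H-1) := Real.rpow_nonneg (by linarith) _
        have h6 : (1+x) ^ (2*H-1) * x ≤ (1+x) * x := mul_le_mul_of_nonneg_right h2 hx
        have h7 : 2*H*((1+x) ^ (2*H-1)*x) ≤ 2*H*((1+x)*x) :=
          mul_le_mul_of_nonneg_left h6 (by linarith)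
        have h8 : 2*H*((1+x)*x) ≤ 2*((1+x)*x) :=
          mul_le_mul_of_nonneg_right (by linarith) (by nlinarith)
        have h9 : 2*((1+x)*x) ≤ 4*x := by nlinarith [mul_le_mul_of_nonneg_right hx1 hx]
        nlinarith [h7, h8, h9]
      · have h1 : (1+x) ^ (2*H) - x ^ (2*H) ≤ 2*H * (1+x) ^ (2*H-1) * ((1+x) - x) :=
          rpow_diff_le_upper hq1 hx (by linarith)
        have h2 : (1+x) ^ (2*H-1) ≤ (1+x) ^ (1:ℝ) :=
          Real.rpow_le_rpow_of_exponent_le (by linarith) (by linarith)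
        rw [Real.rpow_one] at h2
        have h3 : (0:ℝ) ≤ (1+x) ^ (2*H-1) := Real.rpow_nonneg (by linarith) _
        have h7 : 2*H*((1+x) ^ (2*H-1)) ≤ 2*H*(1+x) := mul_le_mul_of_nonneg_left h2 (by linarith)
        have h8 : 2*H*(1+x) ≤ 2*(1+x) := mul_le_mul_of_nonneg_right (by linarith) (by linarith)
        nlinarith [h7, h8]
  · set u : ℝ := -x with hu
    have hu0 : 0 < u := by rw [hu]; exact neg_pos.mpr hx
    have hxx : |x| = u := abs_of_neg hx
    unfold theta1
    rw [hxx]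
    have h1pxu : 1 + x = 1 - u := by rw [hu]; ring
    rw [h1pxu]
    rcases le_or_gt u 1 with hu1 | hu1
    · have habs : |1 - u| = 1 - u := abs_of_nonneg (by linarith)
      rw [habs]
      have hle1 : (1-u) ^ (2*H) ≤ 1 := Real.rpow_le_one (by linarith) (by linarith) (by linarith)
      have h1 : 1 ^ (2*H) - (1-u) ^ (2*H) ≤ 2*H * 1 ^ (2*H-1) * (1 - (1-u)) :=
        rpow_diff_le_upper hq1 (by linarith) (by linarith)
      rw [Real.one_rpow, Real.one_rpow] at h1
      have h2 : u ^ (2*H) ≤ u ^ (1:ℝ) :=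
        Real.rpow_le_rpow_of_exponent_ge hu0 hu1 (by linarith)
      rw [Real.rpow_one] at h2
      have hq0 : (0:ℝ) ≤ u ^ (2*H) := Real.rpow_nonneg hu0.le _
      constructor
      · nlinarith
      · nlinarith
    · have habs : |1 - u| = u - 1 := by rw [abs_of_neg (by linarith)]; ring
      rw [habs]
      have h1 : u ^ (2*H) - (u-1) ^ (2*H) ≤ 2*H * u ^ (2*H-1) * (u - (u-1)) :=
        rpow_diff_le_upper hq1 (by linarith) (by linarith)
      have h2 : u ^ (2*H-1) ≤ u ^ (1:ℝ) :=
        Real.rpow_le_rpow_of_exponent_le (by linarith) (by linarith)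
      rw [Real.rpow_one] at h2
      have h3 : (u-1) ^ (2*H) ≤ u ^ (2*H) := Real.rpow_le_rpow (by linarith) (by linarith) (by linarith)
      have h4 : (0:ℝ) ≤ u ^ (2*H-1) := Real.rpow_nonneg (by linarith) _
      constructor
      · nlinarith
      · nlinarith

lemma phi_nonneg {H s t : ℝ} (hH : H ∈ Set.Ioo (1/2:ℝ) 1) (hs : 0 < s) (hst : s < t) :
    0 ≤ phiFn H s t := by
  obtain ⟨hH1, hH2⟩ := hH
  have h := rpow_superadd (p := 2*H) (by linarith) hs.le (by linarith : (0:ℝ) ≤ t - s)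
  rw [add_sub_cancel] at h
  unfold phiFn
  linarith

lemma phi_le_prod {H s t : ℝ} (hH : H ∈ Set.Ioo (1/2:ℝ) 1) (hs : 0 < s) (hst : s < t) :
    phiFn H s t ≤ 2*H * t ^ (2*H-2) * (s*(t-s)) := by
  obtain ⟨hH1, hH2⟩ := hH
  have hq1 : (1:ℝ) ≤ 2*H := by linarith
  have ht : (0:ℝ) < t := hs.trans hst
  have h1 : t ^ (2*H) - (t-s) ^ (2*H) ≤ 2*H * t ^ (2*H-1) * s := by
    have := rpow_diff_le_upper (A := t - s) (B := t) hq1 (by linarith) (by linarith)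
    simpa using this
  have h2 : t ^ (2*H) - s ^ (2*H) ≤ 2*H * t ^ (2*H-1) * (t-s) := by
    have := rpow_diff_le_upper (A := s) (B := t) hq1 hs.le hst.le
    simpa using this
  have hsq : (0:ℝ) ≤ s ^ (2*H) := Real.rpow_nonneg hs.le _
  have htsq : (0:ℝ) ≤ (t-s) ^ (2*H) := Real.rpow_nonneg (by linarith) _
  have hphis : 2 * phiFn H s t ≤ 2*H * t ^ (2*H-1) * s := by
    unfold phiFn; linarith
  have hphits : 2 * phiFn H s t ≤ 2*H * t ^ (2*H-1) * (t-s) := by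
    unfold phiFn; linarith
  -- multiply: (2φ)*s ≤ q t^{q-1}(t-s)*s , (2φ)*(t-s) ≤ q t^{q-1} s (t-s)
  have hm1 : (2 * phiFn H s t) * s ≤ (2*H * t ^ (2*H-1) * (t-s)) * s :=
    mul_le_mul_of_nonneg_right hphits hs.le
  have hm2 : (2 * phiFn H s t) * (t-s) ≤ (2*H * t ^ (2*H-1) * s) * (t-s) :=
    mul_le_mul_of_nonneg_right hphis (by linarith)
  have hmt : phiFn H s t * t ≤ 2*H * t ^ (2*H-1) * (s * (t-s)) := by nlinarith [hm1, hm2]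
  have ht1 : t ^ (2*H-1) = t ^ (2*H-2) * t := by
    rw [show (2*H-1) = (2*H-2) + 1 by ring, Real.rpow_add_one ht.ne']
  rw [ht1] at hmt
  have := le_of_mul_le_mul_right (by nlinarith [hmt] : phiFn H s t * t ≤ (2*H * t ^ (2*H-2) * (s*(t-s))) * t) ht
  exact this

lemma gamma_exists {H : ℝ} (hH : H ∈ Set.Ioo (1/2:ℝ) 1) :
    ∃ γ : ℝ, 0 ≤ γ ∧ γ < 1 ∧ ∀ u : ℝ, u ∈ Set.Ioo (0:ℝ) 1 →
      1 - u ^ (2*H) - (1-u) ^ (2*H) ≤ 2 * γ * (u ^ H * (1-u) ^ H) := by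
  obtain ⟨hH1, hH2⟩ := hH
  have hH0 : (0:ℝ) < H := by linarith
  have hq1 : (1:ℝ) ≤ 2*H := by linarith
  set η : ℝ := (1/(4*H)) ^ ((1:ℝ)/(1-H)) with hηdef
  have hb0 : (0:ℝ) < 1/(4*H) := by positivity
  have hb2 : (1:ℝ)/(4*H) ≤ 1/2 := by
    rw [div_le_div_iff₀ (by linarith) (by norm_num)]; linarith
  have hη0 : 0 < η := Real.rpow_pos_of_pos hb0 _
  have hηhalf : η ≤ 1/2 := by
    have h1 : η ≤ (1/(4*H)) ^ (1:ℝ) := by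
      apply Real.rpow_le_rpow_of_exponent_ge hb0 (by linarith)
      rw [le_div_iff₀ (by linarith : (0:ℝ) < 1-H)]; linarith
    rw [Real.rpow_one] at h1; linarith
  -- edge estimate
  have edge : ∀ u : ℝ, 0 < u → u ≤ η → 1 - u ^ (2*H) - (1-u) ^ (2*H) ≤ u ^ H * (1-u) ^ H := by
    intro u hu huη
    have hu2 : u ≤ 1/2 := huη.trans hηhalf
    have h1 : (1:ℝ) ^ (2*H) - (1-u) ^ (2*H) ≤ 2*H * (1:ℝ) ^ (2*H-1) * (1 - (1-u)) :=
      rpow_diff_le_upper hq1 (by linarith) (by linarith)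
    rw [Real.one_rpow, Real.one_rpow] at h1
    have h1' : 1 - (1-u) ^ (2*H) ≤ 2*H*u := by linarith [h1]
    have huq : (0:ℝ) ≤ u ^ (2*H) := Real.rpow_nonneg hu.le _
    -- 2*H*u ≤ u^H*(1-u)^H
    have hsplit : u = u ^ H * u ^ (1-H) := by
      rw [← Real.rpow_add hu]; norm_num
    have hu1H : u ^ (1-H) ≤ 1/(4*H) := by
      have hmono : u ^ (1-H) ≤ η ^ (1-H) :=
        Real.rpow_le_rpow hu.le huη (by linarith)
      have hval : η ^ (1-H) = 1/(4*H) := by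
        rw [hηdef, ← Real.rpow_mul hb0.le]
        rw [div_mul_cancel₀ (1:ℝ) (by linarith : (1:ℝ)-H ≠ 0), Real.rpow_one]
      rw [hval] at hmono; exact hmono
    have h2H : 2*H*(u ^ (1-H)) ≤ 1/2 := by
      have := mul_le_mul_of_nonneg_left hu1H (by linarith : (0:ℝ) ≤ 2*H)
      calc 2*H*(u ^ (1-H)) ≤ 2*H*(1/(4*H)) := this
        _ = 1/2 := by field_simp; ring
    have h1mu : (1:ℝ)/2 ≤ (1-u) ^ H := by
      have ha : ((1:ℝ)/2) ^ (1:ℝ) ≤ ((1:ℝ)/2) ^ H :=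
        Real.rpow_le_rpow_of_exponent_ge (by norm_num) (by norm_num) (by linarith)
      have hbm : ((1:ℝ)/2) ^ H ≤ (1-u) ^ H :=
        Real.rpow_le_rpow (by norm_num) (by linarith) (by linarith)
      rw [Real.rpow_one] at ha; linarith
    have hkey : 2*H*u ≤ u ^ H * (1-u) ^ H := by
      have huH : (0:ℝ) ≤ u ^ H := Real.rpow_nonneg hu.le _
      have hmulsplit : (2*H*(u ^ (1-H))) * u ^ H = 2*H*u := by
        rw [mul_assoc, ← Real.rpow_add hu]; norm_num
      calc 2*H*u = (2*H*(u ^ (1-H))) * u ^ H := hmulsplit.symm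
        _ ≤ (1/2) * u ^ H := mul_le_mul_of_nonneg_right h2H huH
        _ ≤ (1-u) ^ H * u ^ H := mul_le_mul_of_nonneg_right h1mu huH
        _ = u ^ H * (1-u) ^ H := by ring
    linarith
  -- middle: compact maximum
  set g : ℝ → ℝ := fun u => (1 - u ^ (2*H) - (1-u) ^ (2*H)) / (2*(u ^ H * (1-u) ^ H)) with hgdef
  have hKne : (Set.Icc η (1-η)).Nonempty := ⟨η, by constructor <;> linarith⟩
  have hgc : ContinuousOn g (Set.Icc η (1-η)) := by
    apply ContinuousOn.div
    · exact (continuousOn_const.sub (continuousOn_id.rpow_const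
        (fun x _ => Or.inr (by linarith)))).sub
        ((continuousOn_const.sub continuousOn_id).rpow_const (fun x _ => Or.inr (by linarith)))
    · exact continuousOn_const.mul ((continuousOn_id.rpow_const
        (fun x _ => Or.inr (by linarith))).mul
        ((continuousOn_const.sub continuousOn_id).rpow_const (fun x _ => Or.inr (by linarith))))
    · intro x hx
      obtain ⟨hx1, hx2⟩ := hx
      have hx0 : 0 < x := lt_of_lt_of_le hη0 hx1
      have hx3 : 0 < 1 - x := by linarith [hx2, hη0]
      have : 0 < 2*(x ^ H * (1-x) ^ H) := by positivity
      exact this.ne'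
  obtain ⟨u₀, hu₀K, hmax⟩ := isCompact_Icc.exists_isMaxOn hKne hgc
  obtain ⟨hu₀1, hu₀2⟩ := hu₀K
  have hu₀pos : 0 < u₀ := lt_of_lt_of_le hη0 hu₀1
  have hu₀lt1 : u₀ < 1 := by linarith
  have h1mu₀ : 0 < 1 - u₀ := by linarith
  set γ₀ : ℝ := g u₀ with hγ₀def
  have hX₀ : 0 < 2*(u₀ ^ H * (1-u₀) ^ H) := by positivity
  have hγ₀lt1 : γ₀ < 1 := by
    show (1 - u₀ ^ (2*H) - (1-u₀) ^ (2*H)) / (2*(u₀ ^ H * (1-u₀) ^ H)) < 1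
    rw [div_lt_one hX₀]
    have e1 : u₀ ^ H * u₀ ^ H = u₀ ^ (2*H) := by
      rw [← Real.rpow_add hu₀pos]; ring_nf
    have e2 : (1-u₀) ^ H * (1-u₀) ^ H = (1-u₀) ^ (2*H) := by
      rw [← Real.rpow_add h1mu₀]; ring_nf
    have hA : u₀ < u₀ ^ H := by
      have := Real.rpow_lt_rpow_of_exponent_gt hu₀pos hu₀lt1 (by linarith : H < 1)
      rwa [Real.rpow_one] at this
    have hB : 1 - u₀ < (1-u₀) ^ H := by
      have := Real.rpow_lt_rpow_of_exponent_gt h1mu₀ (by linarith) (by linarith : H < 1)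
      rwa [Real.rpow_one] at this
    nlinarith [hA, hB, e1, e2, Real.rpow_nonneg hu₀pos.le H, Real.rpow_nonneg h1mu₀.le H]
  refine ⟨max γ₀ (1/2), le_trans (by norm_num) (le_max_right _ _), max_lt hγ₀lt1 (by norm_num), ?_⟩
  intro u hu
  obtain ⟨hu0, hu1⟩ := hu
  have hX : (0:ℝ) ≤ u ^ H * (1-u) ^ H :=
    mul_nonneg (Real.rpow_nonneg hu0.le _) (Real.rpow_nonneg (by linarith) _)
  have hγhalf : (1:ℝ)/2 ≤ max γ₀ (1/2) := le_max_right _ _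
  rcases le_or_gt u η with hcase | hcase
  · have := edge u hu0 hcase
    nlinarith [this, hX]
  · rcases le_or_gt (1-u) η with hcase2 | hcase2
    · have := edge (1-u) (by linarith) hcase2
      rw [sub_sub_cancel] at this
      nlinarith [this, hX]
    · have hmem : u ∈ Set.Icc η (1-η) := ⟨hcase.le, by linarith⟩
      have hgu := hmax hmem
      have hXpos : (0:ℝ) < 2*(u ^ H * (1-u) ^ H) := by
        have h1u : 0 < 1 - u := by linarith
        positivity
      have h2 : (1 - u ^ (2*H) - (1-u) ^ (2*H)) / (2*(u ^ H * (1-u) ^ H)) ≤ max γ₀ (1/2) :=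
        le_trans hgu (le_max_left _ _)
      rw [div_le_iff₀ hXpos] at h2
      linarith [h2]

lemma phi_le_gamma {H γ s t : ℝ}
    (hγ : ∀ u : ℝ, u ∈ Set.Ioo (0:ℝ) 1 →
      1 - u ^ (2*H) - (1-u) ^ (2*H) ≤ 2 * γ * (u ^ H * (1-u) ^ H))
    (hs : 0 < s) (hst : s < t) :
    phiFn H s t ≤ γ * (s ^ H * (t-s) ^ H) := by
  have ht : 0 < t := hs.trans hst
  have h := hγ (s/t) ⟨by positivity, (div_lt_one ht).mpr hst⟩
  have h1u : 1 - s/t = (t-s)/t := by field_simp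
  rw [h1u, Real.div_rpow hs.le ht.le, Real.div_rpow (by linarith : (0:ℝ) ≤ t-s) ht.le,
    Real.div_rpow hs.le ht.le, Real.div_rpow (by linarith : (0:ℝ) ≤ t-s) ht.le] at h
  have htq : (0:ℝ) < t ^ (2*H) := Real.rpow_pos_of_pos ht _
  have htH : (0:ℝ) < t ^ H := Real.rpow_pos_of_pos ht _
  have hHH : t ^ H * t ^ H = t ^ (2*H) := by rw [← Real.rpow_add ht]; ring_nf
  have hmul := mul_le_mul_of_nonneg_right h htq.le
  have eL : (1 - s ^ (2*H)/t ^ (2*H) - (t-s) ^ (2*H)/t ^ (2*H)) * t ^ (2*H)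
      = t ^ (2*H) - s ^ (2*H) - (t-s) ^ (2*H) := by field_simp
  have eR : (2*γ*(s ^ H/t ^ H * ((t-s) ^ H/t ^ H))) * t ^ (2*H)
      = 2*γ*(s ^ H*(t-s) ^ H) := by rw [← hHH]; field_simp; try ring
  rw [eL, eR] at hmul
  unfold phiFn
  linarith

lemma theta_eq (H s t : ℝ) :
    ThetaFn H s t = s ^ (2*H) * (t-s) ^ (2*H) - (phiFn H s t)^2 := by
  unfold ThetaFn Rcov phiFn; ring

lemma theta_lower {H γ s t : ℝ} (hγ0 : 0 ≤ γ) (hs : 0 < s) (hst : s < t)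
    (hγle : phiFn H s t ≤ γ * (s ^ H * (t-s) ^ H)) (hφ0 : 0 ≤ phiFn H s t) :
    (1-γ^2) * (s ^ (2*H) * (t-s) ^ (2*H)) ≤ ThetaFn H s t := by
  rw [theta_eq]
  have hts : (0:ℝ) < t - s := by linarith
  have e1 : s ^ H * s ^ H = s ^ (2*H) := by rw [← Real.rpow_add hs]; ring_nf
  have e2 : (t-s) ^ H * (t-s) ^ H = (t-s) ^ (2*H) := by rw [← Real.rpow_add hts]; ring_nf
  have hXX : (γ*(s ^ H*(t-s) ^ H))*(γ*(s ^ H*(t-s) ^ H)) = γ^2*(s ^ (2*H)*(t-s) ^ (2*H)) := by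
    rw [← e1, ← e2]; ring
  have hφ2 : phiFn H s t * phiFn H s t ≤ γ^2*(s ^ (2*H)*(t-s) ^ (2*H)) := by
    rw [← hXX]
    exact mul_le_mul hγle hγle hφ0 (by positivity)
  nlinarith [hφ2]

lemma abstract_key {a b c ti r2 r4 : ℝ} (ha : 0 ≤ a) (hb : 0 ≤ b) (hc : 0 ≤ c)
    (hti : 0 ≤ ti) (hr2 : 0 ≤ r2) (hr4 : 0 ≤ r4) :
    12*(a*(b*c)) + r2 + r4 ≤ (12*a + 1) * (ti + r2 + b*(c+1) + r4) := by
  nlinarith [mul_nonneg ha hti, mul_nonneg ha hr2, mul_nonneg ha hr4,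
    mul_nonneg ha hb, mul_nonneg hb hc, mul_nonneg (mul_nonneg ha hb) hc]

set_option maxHeartbeats 1000000 in
lemma statement14_part1 {H T : ℝ} (hH : H ∈ Set.Ioo (1/2 : ℝ) 1) (hT : 0 < T) :
    ∃ C : ℝ, 0 < C ∧ ∀ ε δ : ℝ, ε ∈ Set.Ioo (0:ℝ) 1 → δ ∈ Set.Ioo (0:ℝ) 1 →
      ∀ s t : ℝ, 0 < s → s < t → t ≤ T →
      |ε⁻¹ * eta12 H ε s t| * |δ⁻¹ * eta22 H δ s t| * (t-s) ^ (2*H)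
        ≤ C * (t⁻¹ + s ^ (H-1) * (t-s) ^ (H-1)
          + s ^ (1-2*H) * (t ^ (2*H-2) + 1) + (t-s) ^ (2*H-2)) := by
  obtain ⟨hH1, hH2⟩ := hH
  obtain ⟨γ, hγ0, hγ1, hγ⟩ := gamma_exists ⟨hH1, hH2⟩
  have hc : 0 < 1 - γ^2 := by nlinarith
  set c : ℝ := 1 - γ^2 with hcdef
  refine ⟨(4/c^2)*(12*T^(2*H-1) + 1), by positivity, ?_⟩
  rintro ε δ ⟨hε0, hε1⟩ ⟨hδ0, hδ1⟩ s t hs hst htT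
  have ht : 0 < t := hs.trans hst
  have hts : 0 < t - s := by linarith
  have ha : 0 < s ^ (2*H) := Real.rpow_pos_of_pos hs _
  have hb : 0 < (t-s) ^ (2*H) := Real.rpow_pos_of_pos hts _
  have hτ : 0 < t ^ (2*H) := Real.rpow_pos_of_pos ht _
  have ht1 : 0 < t ^ (2*H-1) := Real.rpow_pos_of_pos ht _
  have ht2 : 0 < t ^ (2*H-2) := Real.rpow_pos_of_pos ht _
  have hφ0 : 0 ≤ phiFn H s t := phi_nonneg ⟨hH1, hH2⟩ hs hst
  have hXpos : 0 < s ^ H * (t-s) ^ H :=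
    mul_pos (Real.rpow_pos_of_pos hs _) (Real.rpow_pos_of_pos hts _)
  have hφX : phiFn H s t ≤ s ^ H * (t-s) ^ H := by
    have := phi_le_gamma hγ hs hst
    nlinarith
  have hφP : phiFn H s t ≤ 2 * t ^ (2*H-2) * (s*(t-s)) := by
    have h1 := phi_le_prod ⟨hH1, hH2⟩ hs hst
    nlinarith [mul_pos ht2 (mul_pos hs hts)]
  have hΘge : c * (s ^ (2*H) * (t-s) ^ (2*H)) ≤ ThetaFn H s t :=
    theta_lower hγ0 hs hst (phi_le_gamma hγ hs hst) hφ0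
  have hΘ0 : 0 < ThetaFn H s t := lt_of_lt_of_le (by positivity) hΘge
  -- θ₁ bounds with positive arguments
  have hth1 : |theta1 H (ε/s)| ≤ 4*(ε/s) := by
    have h := theta1_abs_le ⟨hH1, hH2⟩ (ε/s)
    rwa [show |ε/s| = ε/s from abs_of_pos (div_pos hε0 hs)] at h
  have hth2 : |theta1 H (-ε/(t-s))| ≤ 4*(ε/(t-s)) := by
    have h := theta1_abs_le ⟨hH1, hH2⟩ (-ε/(t-s))
    rwa [show |(-ε/(t-s))| = ε/(t-s) by
      rw [abs_div, abs_neg, abs_of_nonneg hε0.le, abs_of_nonneg hts.le]] at h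
  have hth3 : |theta1 H (δ/t)| ≤ 4*(δ/t) := by
    have h := theta1_abs_le ⟨hH1, hH2⟩ (δ/t)
    rwa [show |δ/t| = δ/t from abs_of_pos (div_pos hδ0 ht)] at h
  have hth4 : |theta1 H (δ/(t-s))| ≤ 4*(δ/(t-s)) := by
    have h := theta1_abs_le ⟨hH1, hH2⟩ (δ/(t-s))
    rwa [show |δ/(t-s)| = δ/(t-s) from abs_of_pos (div_pos hδ0 hts)] at h
  -- bound on |ε⁻¹ * eta12|
  have h12 : |ε⁻¹ * eta12 H ε s t| ≤
      2/c * (phiFn H s t/(s*(t-s) ^ (2*H)) + 1/(t-s)) := by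
    have habs : |eta12 H ε s t| ≤ (ThetaFn H s t)⁻¹ *
        (s ^ (2*H)/2 * (4*(ε/s)) * phiFn H s t
          + (t-s) ^ (2*H)/2 * s ^ (2*H) * (4*(ε/(t-s)))) := by
      unfold eta12
      rw [abs_mul, abs_inv, abs_of_pos hΘ0]
      apply mul_le_mul_of_nonneg_left _ (inv_nonneg.2 hΘ0.le)
      calc |(-(s ^ (2*H) / 2 * theta1 H (ε/s) * phiFn H s t)
            - (t-s) ^ (2*H) / 2 * s ^ (2*H) * theta1 H (-ε/(t-s)))|
          ≤ |s ^ (2*H) / 2 * theta1 H (ε/s) * phiFn H s t|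
            + |(t-s) ^ (2*H) / 2 * s ^ (2*H) * theta1 H (-ε/(t-s))| := by
            rw [show -(s ^ (2*H) / 2 * theta1 H (ε/s) * phiFn H s t)
              - (t-s) ^ (2*H) / 2 * s ^ (2*H) * theta1 H (-ε/(t-s))
              = -((s ^ (2*H) / 2 * theta1 H (ε/s) * phiFn H s t)
              + (t-s) ^ (2*H) / 2 * s ^ (2*H) * theta1 H (-ε/(t-s))) by ring, abs_neg]
            exact abs_add_le _ _
        _ ≤ s ^ (2*H)/2 * (4*(ε/s)) * phiFn H s t
            + (t-s) ^ (2*H)/2 * s ^ (2*H) * (4*(ε/(t-s))) := by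
            apply add_le_add
            · rw [abs_mul, abs_mul, abs_of_nonneg (by positivity : (0:ℝ) ≤ s ^ (2*H)/2),
                abs_of_nonneg hφ0]
              apply mul_le_mul_of_nonneg_right _ hφ0
              exact mul_le_mul_of_nonneg_left hth1 (by positivity)
            · rw [abs_mul, abs_mul, abs_of_nonneg (by positivity : (0:ℝ) ≤ (t-s) ^ (2*H)/2),
                abs_of_nonneg ha.le]
              exact mul_le_mul_of_nonneg_left hth2 (by positivity)
    rw [abs_mul, abs_inv, abs_of_pos hε0]
    have hmono := mul_le_mul_of_nonneg_left habs (inv_nonneg.2 hε0.le)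
    apply le_trans hmono
    have hΘinv : (ThetaFn H s t)⁻¹ ≤ (c * (s ^ (2*H) * (t-s) ^ (2*H)))⁻¹ :=
      inv_anti₀ (by positivity) hΘge
    have e1 : ε⁻¹ * ((ThetaFn H s t)⁻¹ *
        (s ^ (2*H)/2 * (4*(ε/s)) * phiFn H s t
          + (t-s) ^ (2*H)/2 * s ^ (2*H) * (4*(ε/(t-s)))))
        = (ThetaFn H s t)⁻¹ * (2*(s ^ (2*H) * phiFn H s t/s
            + s ^ (2*H) * (t-s) ^ (2*H)/(t-s))) := by
      field_simp
      ring
    rw [e1]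
    have hbr : 0 ≤ 2*(s ^ (2*H) * phiFn H s t/s + s ^ (2*H) * (t-s) ^ (2*H)/(t-s)) := by
      positivity
    have e2 : (c * (s ^ (2*H) * (t-s) ^ (2*H)))⁻¹ *
        (2*(s ^ (2*H) * phiFn H s t/s + s ^ (2*H) * (t-s) ^ (2*H)/(t-s)))
        = 2/c * (phiFn H s t/(s*(t-s) ^ (2*H)) + 1/(t-s)) := by
      field_simp
    calc (ThetaFn H s t)⁻¹ * (2*(s ^ (2*H) * phiFn H s t/s
            + s ^ (2*H) * (t-s) ^ (2*H)/(t-s)))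
        ≤ (c * (s ^ (2*H) * (t-s) ^ (2*H)))⁻¹ *
          (2*(s ^ (2*H) * phiFn H s t/s + s ^ (2*H) * (t-s) ^ (2*H)/(t-s))) :=
          mul_le_mul_of_nonneg_right hΘinv hbr
      _ = 2/c * (phiFn H s t/(s*(t-s) ^ (2*H)) + 1/(t-s)) := e2
  -- bound on |δ⁻¹ * eta22|
  have hd : |dFn H δ s t| ≤ 4*δ*t ^ (2*H-1) := by
    unfold dFn
    have tri : |t ^ (2*H) / 2 * theta1 H (δ/t) - (t-s) ^ (2*H) / 2 * theta1 H (δ/(t-s))|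
        ≤ |t ^ (2*H) / 2 * theta1 H (δ/t)| + |(t-s) ^ (2*H) / 2 * theta1 H (δ/(t-s))| := by
      rw [sub_eq_add_neg]
      refine (abs_add_le _ _).trans ?_
      rw [abs_neg]
    apply le_trans tri
    have b1 : |t ^ (2*H) / 2 * theta1 H (δ/t)| ≤ t ^ (2*H)/2 * (4*(δ/t)) := by
      rw [abs_mul, abs_of_nonneg (by positivity : (0:ℝ) ≤ t ^ (2*H)/2)]
      exact mul_le_mul_of_nonneg_left hth3 (by positivity)
    have b2 : |(t-s) ^ (2*H) / 2 * theta1 H (δ/(t-s))| ≤ (t-s) ^ (2*H)/2 * (4*(δ/(t-s))) := by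
      rw [abs_mul, abs_of_nonneg (by positivity : (0:ℝ) ≤ (t-s) ^ (2*H)/2)]
      exact mul_le_mul_of_nonneg_left hth4 (by positivity)
    have e1 : t ^ (2*H)/2 * (4*(δ/t)) = 2*δ*(t ^ (2*H)/t) := by ring
    have e2 : (t-s) ^ (2*H)/2 * (4*(δ/(t-s))) = 2*δ*((t-s) ^ (2*H)/(t-s)) := by ring
    have e3 : t ^ (2*H)/t = t ^ (2*H-1) := (Real.rpow_sub_one ht.ne' _).symm
    have e4 : (t-s) ^ (2*H)/(t-s) = (t-s) ^ (2*H-1) := (Real.rpow_sub_one hts.ne' _).symm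
    have e5 : (t-s) ^ (2*H-1) ≤ t ^ (2*H-1) :=
      Real.rpow_le_rpow hts.le (by linarith) (by linarith)
    rw [e1, e3] at b1
    rw [e2, e4] at b2
    linarith [b1, b2, mul_le_mul_of_nonneg_left e5 (by positivity : (0:ℝ) ≤ 2*δ)]
  have h22 : |δ⁻¹ * eta22 H δ s t| ≤
      2/c * (2*t ^ (2*H-1)*phiFn H s t/(s ^ (2*H)*(t-s) ^ (2*H)) + 1/(t-s)) := by
    have habs : |eta22 H δ s t| ≤ (ThetaFn H s t)⁻¹ *
        (4*δ*t ^ (2*H-1) * phiFn H s t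
          + s ^ (2*H) * ((t-s) ^ (2*H)/2) * (4*(δ/(t-s)))) := by
      unfold eta22
      rw [abs_mul, abs_inv, abs_of_pos hΘ0]
      apply mul_le_mul_of_nonneg_left _ (inv_nonneg.2 hΘ0.le)
      calc |(-(dFn H δ s t * phiFn H s t)
            + s ^ (2*H) * ((t-s) ^ (2*H) / 2) * theta1 H (δ/(t-s)))|
          ≤ |dFn H δ s t * phiFn H s t|
            + |s ^ (2*H) * ((t-s) ^ (2*H) / 2) * theta1 H (δ/(t-s))| := by
            refine (abs_add_le _ _).trans ?_
            rw [abs_neg]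
        _ ≤ 4*δ*t ^ (2*H-1) * phiFn H s t
            + s ^ (2*H) * ((t-s) ^ (2*H)/2) * (4*(δ/(t-s))) := by
            apply add_le_add
            · rw [abs_mul, abs_of_nonneg hφ0]
              exact mul_le_mul_of_nonneg_right hd hφ0
            · rw [abs_mul, abs_of_nonneg
                (by positivity : (0:ℝ) ≤ s ^ (2*H) * ((t-s) ^ (2*H)/2))]
              exact mul_le_mul_of_nonneg_left hth4 (by positivity)
    rw [abs_mul, abs_inv, abs_of_pos hδ0]
    have hmono := mul_le_mul_of_nonneg_left habs (inv_nonneg.2 hδ0.le)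
    apply le_trans hmono
    have hΘinv : (ThetaFn H s t)⁻¹ ≤ (c * (s ^ (2*H) * (t-s) ^ (2*H)))⁻¹ :=
      inv_anti₀ (by positivity) hΘge
    have e1 : δ⁻¹ * ((ThetaFn H s t)⁻¹ *
        (4*δ*t ^ (2*H-1) * phiFn H s t
          + s ^ (2*H) * ((t-s) ^ (2*H)/2) * (4*(δ/(t-s)))))
        = (ThetaFn H s t)⁻¹ * (2*(2*t ^ (2*H-1) * phiFn H s t
            + s ^ (2*H) * (t-s) ^ (2*H)/(t-s))) := by
      field_simp
      ring
    rw [e1]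
    have hbr : 0 ≤ 2*(2*t ^ (2*H-1) * phiFn H s t + s ^ (2*H) * (t-s) ^ (2*H)/(t-s)) := by
      positivity
    have e2 : (c * (s ^ (2*H) * (t-s) ^ (2*H)))⁻¹ *
        (2*(2*t ^ (2*H-1) * phiFn H s t + s ^ (2*H) * (t-s) ^ (2*H)/(t-s)))
        = 2/c * (2*t ^ (2*H-1)*phiFn H s t/(s ^ (2*H)*(t-s) ^ (2*H)) + 1/(t-s)) := by
      field_simp
    calc (ThetaFn H s t)⁻¹ * (2*(2*t ^ (2*H-1) * phiFn H s t
            + s ^ (2*H) * (t-s) ^ (2*H)/(t-s)))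
        ≤ (c * (s ^ (2*H) * (t-s) ^ (2*H)))⁻¹ *
          (2*(2*t ^ (2*H-1) * phiFn H s t + s ^ (2*H) * (t-s) ^ (2*H)/(t-s))) :=
          mul_le_mul_of_nonneg_right hΘinv hbr
      _ = 2/c * (2*t ^ (2*H-1)*phiFn H s t/(s ^ (2*H)*(t-s) ^ (2*H)) + 1/(t-s)) := e2
  -- combine the two bounds
  set φ := phiFn H s t with hφdef
  have hcomb : |ε⁻¹ * eta12 H ε s t| * |δ⁻¹ * eta22 H δ s t| * (t-s) ^ (2*H)
      ≤ (2/c * (φ/(s*(t-s) ^ (2*H)) + 1/(t-s)))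
        * (2/c * (2*t ^ (2*H-1)*φ/(s ^ (2*H)*(t-s) ^ (2*H)) + 1/(t-s))) * (t-s) ^ (2*H) := by
    apply mul_le_mul_of_nonneg_right _ hb.le
    exact mul_le_mul h12 h22 (abs_nonneg _) (by positivity)
  have hexp : (2/c * (φ/(s*(t-s) ^ (2*H)) + 1/(t-s)))
        * (2/c * (2*t ^ (2*H-1)*φ/(s ^ (2*H)*(t-s) ^ (2*H)) + 1/(t-s))) * (t-s) ^ (2*H)
      = 4/c^2 * (2*t ^ (2*H-1)*φ*φ/(s*(s ^ (2*H))*((t-s) ^ (2*H)))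
          + φ/(s*(t-s)) + 2*t ^ (2*H-1)*φ/((s ^ (2*H))*(t-s))
          + (t-s) ^ (2*H)/((t-s)*(t-s))) := by
    field_simp
    ring
  -- auxiliary exponent identities
  have j1 : s ^ (1-2*H) * s ^ (2*H) = s := by
    rw [← Real.rpow_add hs]; norm_num
  have j2 : (t-s) ^ (2*H) * (t-s) ^ (2-2*H) = (t-s)*(t-s) := by
    rw [← Real.rpow_add hts, show 2*H + (2-2*H) = ((2:ℕ):ℝ) by push_cast; ring,
      Real.rpow_natCast]
    ring
  have k1 : (t-s) ^ (2-2*H) ≤ t ^ (2-2*H) :=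
    Real.rpow_le_rpow hts.le (by linarith) (by linarith)
  have k2 : t ^ (2*H-2) * t ^ (2-2*H) = 1 := by
    rw [← Real.rpow_add ht]; norm_num
  have k3 : t ^ (2*H-1) ≤ T ^ (2*H-1) :=
    Real.rpow_le_rpow ht.le htT (by linarith)
  have hT1pos : 0 < T ^ (2*H-1) := Real.rpow_pos_of_pos hT _
  have hu3 : 0 < s ^ (1-2*H) := Real.rpow_pos_of_pos hs _
  -- term 1
  have hPP : φ*φ ≤ (2*t ^ (2*H-2)*(s*(t-s)))*(2*t ^ (2*H-2)*(s*(t-s))) :=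
    mul_le_mul hφP hφP hφ0 (by positivity)
  have m1 : t ^ (2*H-2)*((t-s)*(t-s)) ≤ (t-s) ^ (2*H) := by
    rw [← j2]
    have h0 : t ^ (2*H-2)*(t-s) ^ (2-2*H) ≤ 1 := by
      calc t ^ (2*H-2)*(t-s) ^ (2-2*H) ≤ t ^ (2*H-2)*t ^ (2-2*H) :=
            mul_le_mul_of_nonneg_left k1 ht2.le
        _ = 1 := k2
    nlinarith [h0, hb]
  have hB1 : 2*t ^ (2*H-1)*φ*φ/(s*(s ^ (2*H))*((t-s) ^ (2*H)))
      ≤ 8*T ^ (2*H-1)*(s ^ (1-2*H)*t ^ (2*H-2)) := by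
    rw [div_le_iff₀ (by positivity)]
    calc 2*t ^ (2*H-1)*φ*φ = 2*t ^ (2*H-1)*(φ*φ) := by ring
      _ ≤ 2*t ^ (2*H-1)*((2*t ^ (2*H-2)*(s*(t-s)))*(2*t ^ (2*H-2)*(s*(t-s)))) :=
          mul_le_mul_of_nonneg_left hPP (by positivity)
      _ = 8*(s*s)*(t ^ (2*H-2))*t ^ (2*H-1)*(t ^ (2*H-2)*((t-s)*(t-s))) := by ring
      _ ≤ 8*(s*s)*(t ^ (2*H-2))*t ^ (2*H-1)*((t-s) ^ (2*H)) :=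
          mul_le_mul_of_nonneg_left m1 (by positivity)
      _ ≤ 8*(s*s)*(t ^ (2*H-2))*T ^ (2*H-1)*((t-s) ^ (2*H)) := by
          have := mul_le_mul_of_nonneg_right
            (mul_le_mul_of_nonneg_left k3 (by positivity : (0:ℝ) ≤ 8*(s*s)*(t ^ (2*H-2))))
            hb.le
          calc 8*(s*s)*(t ^ (2*H-2))*t ^ (2*H-1)*((t-s) ^ (2*H))
              = 8*(s*s)*(t ^ (2*H-2))*(t ^ (2*H-1))*((t-s) ^ (2*H)) := by ring
            _ ≤ 8*(s*s)*(t ^ (2*H-2))*(T ^ (2*H-1))*((t-s) ^ (2*H)) := this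
      _ = 8*T ^ (2*H-1)*(s ^ (1-2*H)*t ^ (2*H-2))*(s*(s ^ (2*H))*((t-s) ^ (2*H))) := by
          linear_combination (-(8*T ^ (2*H-1)*(t ^ (2*H-2))*((t-s) ^ (2*H))*s)) * j1
  -- term 2
  have i1 : s ^ (H-1)*s = s ^ H := by
    rw [show s ^ (H-1)*s = s ^ (H-1+1) from (Real.rpow_add_one hs.ne' (H-1)).symm,
      show H-1+1 = H by ring]
  have i2 : (t-s) ^ (H-1)*(t-s) = (t-s) ^ H := by
    rw [show (t-s) ^ (H-1)*(t-s) = (t-s) ^ (H-1+1) from (Real.rpow_add_one hts.ne' (H-1)).symm,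
      show H-1+1 = H by ring]
  have hB2 : φ/(s*(t-s)) ≤ s ^ (H-1)*(t-s) ^ (H-1) := by
    rw [div_le_iff₀ (by positivity)]
    calc φ ≤ s ^ H * (t-s) ^ H := hφX
      _ = s ^ (H-1)*(t-s) ^ (H-1)*(s*(t-s)) := by
          linear_combination (-((t-s) ^ (H-1)*(t-s))) * i1 + (-(s ^ H)) * i2
  -- term 3
  have hB3 : 2*t ^ (2*H-1)*φ/((s ^ (2*H))*(t-s))
      ≤ 4*T ^ (2*H-1)*(s ^ (1-2*H)*t ^ (2*H-2)) := by
    rw [div_le_iff₀ (by positivity)]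
    calc 2*t ^ (2*H-1)*φ ≤ 2*t ^ (2*H-1)*(2*t ^ (2*H-2)*(s*(t-s))) :=
          mul_le_mul_of_nonneg_left hφP (by positivity)
      _ = 4*(t ^ (2*H-2)*(s*(t-s)))*t ^ (2*H-1) := by ring
      _ ≤ 4*(t ^ (2*H-2)*(s*(t-s)))*T ^ (2*H-1) :=
          mul_le_mul_of_nonneg_left k3 (by positivity)
      _ = 4*T ^ (2*H-1)*(s ^ (1-2*H)*t ^ (2*H-2))*((s ^ (2*H))*(t-s)) := by
          linear_combination (-(4*T ^ (2*H-1)*(t ^ (2*H-2))*(t-s))) * j1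
  -- term 4
  have j2' : (t-s) ^ (2*H-2)*((t-s)*(t-s)) = (t-s) ^ (2*H) := by
    rw [show (t-s) ^ (2*H-2)*((t-s)*(t-s)) = ((t-s) ^ (2*H-2)*(t-s))*(t-s) by ring,
      show (t-s) ^ (2*H-2)*(t-s) = (t-s) ^ (2*H-2+1) from
        (Real.rpow_add_one hts.ne' (2*H-2)).symm,
      show (t-s) ^ (2*H-2+1)*(t-s) = (t-s) ^ (2*H-2+1+1) from
        (Real.rpow_add_one hts.ne' (2*H-2+1)).symm,
      show 2*H-2+1+1 = 2*H by ring]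
  have hB4 : (t-s) ^ (2*H)/((t-s)*(t-s)) ≤ (t-s) ^ (2*H-2) := by
    rw [div_le_iff₀ (by positivity)]
    linarith [j2']
  -- final assembly
  have hsum : 4/c^2 * (2*t ^ (2*H-1)*φ*φ/(s*(s ^ (2*H))*((t-s) ^ (2*H)))
          + φ/(s*(t-s)) + 2*t ^ (2*H-1)*φ/((s ^ (2*H))*(t-s))
          + (t-s) ^ (2*H)/((t-s)*(t-s)))
      ≤ 4/c^2 * (12*(T ^ (2*H-1)*(s ^ (1-2*H)*t ^ (2*H-2)))
          + s ^ (H-1)*(t-s) ^ (H-1) + (t-s) ^ (2*H-2)) := by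
    apply mul_le_mul_of_nonneg_left _ (by positivity)
    linarith only [hB1, hB2, hB3, hB4]
  have hR2 : (0:ℝ) ≤ s ^ (H-1)*(t-s) ^ (H-1) := by positivity
  have hR4 : (0:ℝ) ≤ (t-s) ^ (2*H-2) := by positivity
  have htinv : (0:ℝ) ≤ t⁻¹ := by positivity
  have hfin : 4/c^2 * (12*(T ^ (2*H-1)*(s ^ (1-2*H)*t ^ (2*H-2)))
          + s ^ (H-1)*(t-s) ^ (H-1) + (t-s) ^ (2*H-2))
      ≤ (4/c^2)*(12*T ^ (2*H-1) + 1) * (t⁻¹ + s ^ (H-1) * (t-s) ^ (H-1)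
          + s ^ (1-2*H) * (t ^ (2*H-2) + 1) + (t-s) ^ (2*H-2)) := by
    have hD : (0:ℝ) < 4/c^2 := by positivity
    have key : 12*(T ^ (2*H-1)*(s ^ (1-2*H)*t ^ (2*H-2)))
          + s ^ (H-1)*(t-s) ^ (H-1) + (t-s) ^ (2*H-2)
        ≤ (12*T ^ (2*H-1) + 1) * (t⁻¹ + s ^ (H-1) * (t-s) ^ (H-1)
          + s ^ (1-2*H) * (t ^ (2*H-2) + 1) + (t-s) ^ (2*H-2)) :=
      abstract_key hT1pos.le hu3.le ht2.le htinv hR2 hR4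
    calc 4/c^2 * (12*(T ^ (2*H-1)*(s ^ (1-2*H)*t ^ (2*H-2)))
          + s ^ (H-1)*(t-s) ^ (H-1) + (t-s) ^ (2*H-2))
        ≤ 4/c^2 * ((12*T ^ (2*H-1) + 1) * (t⁻¹ + s ^ (H-1) * (t-s) ^ (H-1)
          + s ^ (1-2*H) * (t ^ (2*H-2) + 1) + (t-s) ^ (2*H-2))) :=
          mul_le_mul_of_nonneg_left key hD.le
      _ = (4/c^2)*(12*T ^ (2*H-1) + 1) * (t⁻¹ + s ^ (H-1) * (t-s) ^ (H-1)
          + s ^ (1-2*H) * (t ^ (2*H-2) + 1) + (t-s) ^ (2*H-2)) := by ring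
  calc |ε⁻¹ * eta12 H ε s t| * |δ⁻¹ * eta22 H δ s t| * (t-s) ^ (2*H)
      ≤ (2/c * (φ/(s*(t-s) ^ (2*H)) + 1/(t-s)))
        * (2/c * (2*t ^ (2*H-1)*φ/(s ^ (2*H)*(t-s) ^ (2*H)) + 1/(t-s))) * (t-s) ^ (2*H) := hcomb
    _ = 4/c^2 * (2*t ^ (2*H-1)*φ*φ/(s*(s ^ (2*H))*((t-s) ^ (2*H)))
          + φ/(s*(t-s)) + 2*t ^ (2*H-1)*φ/((s ^ (2*H))*(t-s))
          + (t-s) ^ (2*H)/((t-s)*(t-s))) := hexp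
    _ ≤ 4/c^2 * (12*(T ^ (2*H-1)*(s ^ (1-2*H)*t ^ (2*H-2)))
          + s ^ (H-1)*(t-s) ^ (H-1) + (t-s) ^ (2*H-2)) := hsum
    _ ≤ (4/c^2)*(12*T ^ (2*H-1) + 1) * (t⁻¹ + s ^ (H-1) * (t-s) ^ (H-1)
          + s ^ (1-2*H) * (t ^ (2*H-2) + 1) + (t-s) ^ (2*H-2)) := hfin



-- inner-section integrability
lemma sect_integrable {α β : ℝ} (hα1 : -1 < α) (hα0 : α ≤ 0) (hβ1 : -1 < β) (hβ0 : β ≤ 0)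
    {y : ℝ} (hy : 0 < y) :
    IntegrableOn (fun x : ℝ => x ^ α * (y - x) ^ β) (Set.Ioo 0 y) volume := by
  have hXint : IntegrableOn (fun x : ℝ => x ^ α) (Set.Ioo 0 y) volume :=
    ((intervalIntegral.intervalIntegrable_rpow' hα1 (a := 0) (b := y)).1).mono_set Set.Ioo_subset_Ioc_self
  have hYint : IntegrableOn (fun x : ℝ => (y - x) ^ β) (Set.Ioo 0 y) volume := by
    have h0 : IntervalIntegrable (fun u : ℝ => u ^ β) volume 0 y := intervalIntegral.intervalIntegrable_rpow' hβ1
    have h1 := (h0.comp_sub_left y).symm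
    simp only [sub_zero, sub_self] at h1
    exact (h1.1).mono_set Set.Ioo_subset_Ioc_self
  have hdom : IntegrableOn
      (fun x : ℝ => (y/2) ^ β * x ^ α + (y/2) ^ α * (y - x) ^ β) (Set.Ioo 0 y) volume :=
    (hXint.const_mul _).add (hYint.const_mul _)
  apply Integrable.mono' hdom
  · apply AEStronglyMeasurable.restrict
    apply Measurable.aestronglyMeasurable
    fun_prop
  · apply (ae_restrict_iff' measurableSet_Ioo).2
    apply ae_of_all
    intro x hx
    obtain ⟨hx0, hxy⟩ := hx
    have hyx : 0 < y - x := by linarith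
    rw [Real.norm_of_nonneg (by positivity)]
    rcases le_or_gt x (y/2) with hc | hc
    · have h2 : (y - x) ^ β ≤ (y/2) ^ β :=
        Real.rpow_le_rpow_of_nonpos (by linarith) (by linarith) hβ0
      have : x ^ α * (y-x) ^ β ≤ x ^ α * (y/2) ^ β :=
        mul_le_mul_of_nonneg_left h2 (by positivity)
      have h3 : (0:ℝ) ≤ (y/2) ^ α * (y-x) ^ β := by positivity
      nlinarith [this, h3]
    · have h2 : x ^ α ≤ (y/2) ^ α :=
        Real.rpow_le_rpow_of_nonpos (by linarith) (by linarith) hα0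
      have : x ^ α * (y-x) ^ β ≤ (y/2) ^ α * (y-x) ^ β :=
        mul_le_mul_of_nonneg_right h2 (by positivity)
      have h3 : (0:ℝ) ≤ (y/2) ^ β * x ^ α := by positivity
      nlinarith [this, h3]

lemma sect_integral_bound {α β : ℝ} (hα1 : -1 < α) (hα0 : α ≤ 0) (hβ1 : -1 < β) (hβ0 : β ≤ 0)
    {y : ℝ} (hy : 0 < y) :
    ∫ x in Set.Ioo 0 y, x ^ α * (y - x) ^ β ∂volume
      ≤ ((2:ℝ) ^ (-β)/(α+1) + (2:ℝ) ^ (-α)/(β+1)) * y ^ (α+β+1) := by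
  have hα1' : (0:ℝ) < α + 1 := by linarith
  have hβ1' : (0:ℝ) < β + 1 := by linarith
  have hXint : IntegrableOn (fun x : ℝ => x ^ α) (Set.Ioo 0 y) volume :=
    ((intervalIntegral.intervalIntegrable_rpow' hα1 (a := 0) (b := y)).1).mono_set Set.Ioo_subset_Ioc_self
  have hYint : IntegrableOn (fun x : ℝ => (y - x) ^ β) (Set.Ioo 0 y) volume := by
    have h0 : IntervalIntegrable (fun u : ℝ => u ^ β) volume 0 y := intervalIntegral.intervalIntegrable_rpow' hβ1
    have h1 := (h0.comp_sub_left y).symm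
    simp only [sub_zero, sub_self] at h1
    exact (h1.1).mono_set Set.Ioo_subset_Ioc_self
  have hdom : IntegrableOn
      (fun x : ℝ => (y/2) ^ β * x ^ α + (y/2) ^ α * (y - x) ^ β) (Set.Ioo 0 y) volume :=
    (hXint.const_mul _).add (hYint.const_mul _)
  have hmono : ∫ x in Set.Ioo 0 y, x ^ α * (y - x) ^ β ∂volume
      ≤ ∫ x in Set.Ioo 0 y, ((y/2) ^ β * x ^ α + (y/2) ^ α * (y - x) ^ β) ∂volume := by
    apply setIntegral_mono_on (sect_integrable hα1 hα0 hβ1 hβ0 hy) hdom measurableSet_Ioo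
    intro x hx
    obtain ⟨hx0, hxy⟩ := hx
    have hyx : 0 < y - x := by linarith
    rcases le_or_gt x (y/2) with hc | hc
    · have h2 : (y - x) ^ β ≤ (y/2) ^ β :=
        Real.rpow_le_rpow_of_nonpos (by linarith) (by linarith) hβ0
      have h4 : x ^ α * (y-x) ^ β ≤ x ^ α * (y/2) ^ β :=
        mul_le_mul_of_nonneg_left h2 (by positivity)
      have h3 : (0:ℝ) ≤ (y/2) ^ α * (y-x) ^ β := by positivity
      nlinarith [h4, h3]
    · have h2 : x ^ α ≤ (y/2) ^ α :=
        Real.rpow_le_rpow_of_nonpos (by linarith) (by linarith) hα0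
      have h4 : x ^ α * (y-x) ^ β ≤ (y/2) ^ α * (y-x) ^ β :=
        mul_le_mul_of_nonneg_right h2 (by positivity)
      have h3 : (0:ℝ) ≤ (y/2) ^ β * x ^ α := by positivity
      nlinarith [h4, h3]
  have hI1 : ∫ x in Set.Ioo 0 y, x ^ α ∂volume = y ^ (α+1)/(α+1) := by
    rw [← integral_Ioc_eq_integral_Ioo, ← intervalIntegral.integral_of_le hy.le]
    rw [integral_rpow (Or.inl hα1)]
    rw [Real.zero_rpow (by linarith : α + 1 ≠ 0)]
    ring
  have hI2 : ∫ x in Set.Ioo 0 y, (y - x) ^ β ∂volume = y ^ (β+1)/(β+1) := by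
    rw [← integral_Ioc_eq_integral_Ioo, ← intervalIntegral.integral_of_le hy.le]
    rw [intervalIntegral.integral_comp_sub_left (fun u : ℝ => u ^ β) y]
    simp only [sub_zero, sub_self]
    rw [integral_rpow (Or.inl hβ1)]
    rw [Real.zero_rpow (by linarith : β + 1 ≠ 0)]
    ring
  have heval : ∫ x in Set.Ioo 0 y, ((y/2) ^ β * x ^ α + (y/2) ^ α * (y - x) ^ β) ∂volume
      = (y/2) ^ β * (y ^ (α+1)/(α+1)) + (y/2) ^ α * (y ^ (β+1)/(β+1)) := by
    rw [integral_add (hXint.const_mul _) (hYint.const_mul _),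
      integral_const_mul, integral_const_mul, hI1, hI2]
  -- identify with the rpow monomial in y
  have hy2 : (y/2) ^ β = (2:ℝ) ^ (-β) * y ^ β := by
    rw [div_eq_mul_inv, Real.mul_rpow hy.le (by norm_num),
      Real.inv_rpow (by norm_num : (0:ℝ) ≤ 2), ← Real.rpow_neg (by norm_num : (0:ℝ) ≤ 2)]
    ring
  have ha2 : (y/2) ^ α = (2:ℝ) ^ (-α) * y ^ α := by
    rw [div_eq_mul_inv, Real.mul_rpow hy.le (by norm_num),
      Real.inv_rpow (by norm_num : (0:ℝ) ≤ 2), ← Real.rpow_neg (by norm_num : (0:ℝ) ≤ 2)]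
    ring
  have m1 : y ^ β * y ^ (α+1) = y ^ (α+β+1) := by rw [← Real.rpow_add hy]; ring_nf
  have m2 : y ^ α * y ^ (β+1) = y ^ (α+β+1) := by rw [← Real.rpow_add hy]; ring_nf
  have hfin : (y/2) ^ β * (y ^ (α+1)/(α+1)) + (y/2) ^ α * (y ^ (β+1)/(β+1))
      = ((2:ℝ) ^ (-β)/(α+1) + (2:ℝ) ^ (-α)/(β+1)) * y ^ (α+β+1) := by
    rw [hy2, ha2]
    field_simp
    linear_combination ((2:ℝ) ^ (-β) * (β+1)) * m1 + ((2:ℝ) ^ (-α) * (α+1)) * m2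
  rw [heval, hfin] at hmono
  exact hmono

lemma integrable_monomial {T α β ζ : ℝ} (hT : 0 < T) (hα1 : -1 < α) (hα0 : α ≤ 0)
    (hβ1 : -1 < β) (hβ0 : β ≤ 0) (hζ0 : ζ ≤ 0) (hsum : -2 < α + β + ζ) :
    IntegrableOn (fun z : ℝ × ℝ => z.1 ^ α * (z.2 - z.1) ^ β * z.2 ^ ζ)
      {z : ℝ × ℝ | 0 < z.1 ∧ z.1 < z.2 ∧ z.2 ≤ T} volume := by
  set g : ℝ × ℝ → ℝ := fun z => z.1 ^ α * (z.2 - z.1) ^ β * z.2 ^ ζ with hgdef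
  set S : Set (ℝ × ℝ) := {z : ℝ × ℝ | 0 < z.1 ∧ z.1 < z.2 ∧ z.2 ≤ T} with hSdef
  have hSm : MeasurableSet S := by
    apply MeasurableSet.inter
    · exact measurableSet_lt measurable_const measurable_fst
    · apply MeasurableSet.inter
      · exact measurableSet_lt measurable_fst measurable_snd
      · exact measurableSet_le measurable_snd measurable_const
  have hgm : Measurable g := by fun_prop
  rw [← integrable_indicator_iff hSm, Measure.volume_eq_prod]
  have hmeas : AEStronglyMeasurable (S.indicator g) ((volume : Measure ℝ).prod volume) := by
    rw [← Measure.volume_eq_prod]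
    exact (hgm.indicator hSm).aestronglyMeasurable
  rw [integrable_prod_iff' hmeas]
  have hsection : ∀ y : ℝ, 0 < y → y ≤ T → (fun x => S.indicator g (x, y))
      = (Set.Ioo (0:ℝ) y).indicator (fun x => x ^ α * (y - x) ^ β * y ^ ζ) := by
    intro y hy hyT
    funext x
    by_cases hx : 0 < x ∧ x < y
    · rw [Set.indicator_of_mem (by exact ⟨hx.1, hx.2, hyT⟩ : (x,y) ∈ S),
        Set.indicator_of_mem (by exact ⟨hx.1, hx.2⟩ : x ∈ Set.Ioo 0 y)]
    · rw [Set.indicator_of_notMem (by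
        intro hmem
        exact hx ⟨hmem.1, hmem.2.1⟩), Set.indicator_of_notMem (by
        intro hmem
        exact hx ⟨hmem.1, hmem.2⟩)]
  have hsection0 : ∀ y : ℝ, ¬(0 < y ∧ y ≤ T) → (fun x => S.indicator g (x, y))
      = fun _ => (0:ℝ) := by
    intro y hy
    funext x
    apply Set.indicator_of_notMem
    intro hmem
    exact hy ⟨lt_trans hmem.1 hmem.2.1, hmem.2.2⟩
  constructor
  · apply ae_of_all
    intro y
    by_cases hy : 0 < y ∧ y ≤ T
    · rw [hsection y hy.1 hy.2, integrable_indicator_iff measurableSet_Ioo]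
      exact (sect_integrable hα1 hα0 hβ1 hβ0 hy.1).mul_const _
    · rw [hsection0 y hy]
      exact integrable_zero _ _ _
  · -- outer integral bound
    set K : ℝ := (2:ℝ) ^ (-β)/(α+1) + (2:ℝ) ^ (-α)/(β+1) with hKdef
    have hK0 : 0 < K := by
      have h1 : (0:ℝ) < α + 1 := by linarith
      have h2 : (0:ℝ) < β + 1 := by linarith
      positivity
    have houter_bound : ∀ y : ℝ, (∫ x, ‖S.indicator g (x, y)‖)
        ≤ (Set.Ioc (0:ℝ) T).indicator (fun y => K * y ^ (α+β+ζ+1)) y := by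
      intro y
      by_cases hy : 0 < y ∧ y ≤ T
      · have hyζ : (0:ℝ) < y ^ ζ := Real.rpow_pos_of_pos hy.1 _
        have hsect' : ∀ x, S.indicator g (x,y)
            = (Set.Ioo (0:ℝ) y).indicator (fun x => x ^ α * (y - x) ^ β * y ^ ζ) x :=
          fun x => congrFun (hsection y hy.1 hy.2) x
        simp only [hsect']
        rw [Set.indicator_of_mem (Set.mem_Ioc.2 hy)]
        have hnorm : ∀ x : ℝ, ‖(Set.Ioo (0:ℝ) y).indicator
            (fun x => x ^ α * (y - x) ^ β * y ^ ζ) x‖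
            = (Set.Ioo (0:ℝ) y).indicator (fun x => x ^ α * (y - x) ^ β * y ^ ζ) x := by
          intro x
          rw [Real.norm_of_nonneg]
          apply Set.indicator_nonneg
          intro x hx
          have h1 : 0 < x := hx.1
          have h2 : 0 < y - x := by have := hx.2; simp at *; linarith
          positivity
        calc ∫ x, ‖(Set.Ioo (0:ℝ) y).indicator (fun x => x ^ α * (y - x) ^ β * y ^ ζ) x‖
            = ∫ x, (Set.Ioo (0:ℝ) y).indicator (fun x => x ^ α * (y - x) ^ β * y ^ ζ) x := by
              congr 1; funext x; exact hnorm x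
          _ = ∫ x in Set.Ioo (0:ℝ) y, x ^ α * (y - x) ^ β * y ^ ζ := by
              rw [integral_indicator measurableSet_Ioo]
          _ = (∫ x in Set.Ioo (0:ℝ) y, x ^ α * (y - x) ^ β) * y ^ ζ := by
              rw [← integral_mul_const]
          _ ≤ (K * y ^ (α+β+1)) * y ^ ζ := by
              apply mul_le_mul_of_nonneg_right
                (sect_integral_bound hα1 hα0 hβ1 hβ0 hy.1) hyζ.le
          _ = K * y ^ (α+β+ζ+1) := by
              rw [mul_assoc, ← Real.rpow_add hy.1]
              ring_nf
      · have hsect' : ∀ x, S.indicator g (x,y) = (0:ℝ) :=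
          fun x => congrFun (hsection0 y hy) x
        simp only [hsect']
        rw [Set.indicator_of_notMem (by
          intro hmem
          exact hy ⟨hmem.1, hmem.2⟩)]
        simp
    have hdom : Integrable ((Set.Ioc (0:ℝ) T).indicator
        (fun y => K * y ^ (α+β+ζ+1))) volume := by
      rw [integrable_indicator_iff measurableSet_Ioc]
      have : IntegrableOn (fun y : ℝ => y ^ (α+β+ζ+1)) (Set.Ioc 0 T) volume :=
        (intervalIntegral.intervalIntegrable_rpow' (by linarith) (a := 0) (b := T)).1
      exact this.const_mul K
    apply Integrable.mono' hdom
    · exact ((hmeas.norm).prod_swap).integral_prod_right'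
    · apply ae_of_all
      intro y
      rw [Real.norm_of_nonneg (by positivity : (0:ℝ) ≤ ∫ x, ‖S.indicator g (x, y)‖)]
      exact houter_bound y

lemma rpow_sum2_le {q a : ℝ} (hq : 0 ≤ q) (ha : 0 ≤ a) :
    (a + 1) ^ q ≤ 2 ^ q * (a ^ q + 1) := by
  rcases le_total a 1 with h | h
  · have h1 : (a+1) ^ q ≤ (2:ℝ) ^ q := Real.rpow_le_rpow (by linarith) (by linarith) hq
    have h2 : (0:ℝ) ≤ a ^ q := Real.rpow_nonneg ha _
    nlinarith [Real.rpow_nonneg (show (0:ℝ) ≤ 2 by norm_num) q]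
  · have h1 : (a+1) ^ q ≤ (2*a) ^ q := Real.rpow_le_rpow (by linarith) (by linarith) hq
    rw [Real.mul_rpow (by norm_num) ha] at h1
    have h2 : (0:ℝ) ≤ (2:ℝ) ^ q := Real.rpow_nonneg (by norm_num) _
    nlinarith [h1, h2]

lemma rpow_sum4_le {q a b c d : ℝ} (hq : 0 ≤ q) (ha : 0 ≤ a) (hb : 0 ≤ b) (hc : 0 ≤ c)
    (hd : 0 ≤ d) :
    (a + b + c + d) ^ q ≤ 4 ^ q * (a ^ q + b ^ q + c ^ q + d ^ q) := by
  set m := max (max a b) (max c d) with hm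
  have hm0 : 0 ≤ m := le_trans ha (le_trans (le_max_left a b) (le_max_left _ _))
  have hsum : a + b + c + d ≤ 4 * m := by
    have h1 : a ≤ m := le_trans (le_max_left a b) (le_max_left _ _)
    have h2 : b ≤ m := le_trans (le_max_right a b) (le_max_left _ _)
    have h3 : c ≤ m := le_trans (le_max_left c d) (le_max_right _ _)
    have h4 : d ≤ m := le_trans (le_max_right c d) (le_max_right _ _)
    linarith
  have h1 : (a+b+c+d) ^ q ≤ (4*m) ^ q :=
    Real.rpow_le_rpow (by linarith) hsum hq
  rw [Real.mul_rpow (by norm_num) hm0] at h1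
  have h2 : m ^ q ≤ a ^ q + b ^ q + c ^ q + d ^ q := by
    have hma := Real.rpow_nonneg ha q
    have hmb := Real.rpow_nonneg hb q
    have hmc := Real.rpow_nonneg hc q
    have hmd := Real.rpow_nonneg hd q
    rcases max_choice (max a b) (max c d) with h | h <;> rw [hm, h]
    · rcases max_choice a b with h' | h' <;> rw [h'] <;> linarith
    · rcases max_choice c d with h' | h' <;> rw [h'] <;> linarith
  calc (a+b+c+d) ^ q ≤ (4:ℝ) ^ q * m ^ q := h1
    _ ≤ 4 ^ q * (a ^ q + b ^ q + c ^ q + d ^ q) :=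
      mul_le_mul_of_nonneg_left h2 (Real.rpow_nonneg (by norm_num) _)

lemma statement14_part2 {H T : ℝ} (hH : H ∈ Set.Ioo (1/2 : ℝ) 1) (hT : 0 < T) :
    ∀ q : ℝ, 1 ≤ q → q < min (1/(2*H-1)) (1/(2-2*H)) →
      IntegrableOn (fun z : ℝ × ℝ =>
          (z.2⁻¹ + z.1 ^ (H-1) * (z.2-z.1) ^ (H-1)
            + z.1 ^ (1-2*H) * (z.2 ^ (2*H-2) + 1) + (z.2-z.1) ^ (2*H-2)) ^ q)
        {z : ℝ × ℝ | 0 < z.1 ∧ z.1 < z.2 ∧ z.2 ≤ T} volume := by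
  obtain ⟨hH1, hH2⟩ := hH
  intro q hq1 hq2
  have hq0 : (0:ℝ) ≤ q := by linarith
  have h2H1 : (0:ℝ) < 2*H-1 := by linarith
  have h22H : (0:ℝ) < 2-2*H := by linarith
  have hqA : q*(2*H-1) < 1 := by
    have h := lt_of_lt_of_le hq2 (min_le_left _ _)
    rwa [lt_div_iff₀ h2H1] at h
  have hqB : q*(2-2*H) < 1 := by
    have h := lt_of_lt_of_le hq2 (min_le_right _ _)
    rwa [lt_div_iff₀ h22H] at h
  have hq2' : q < 2 := by nlinarith
  have hqpos : 0 < q := by linarith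
  -- the five dominating monomials
  have hg1 : IntegrableOn (fun z : ℝ × ℝ => z.1 ^ (0:ℝ) * (z.2 - z.1) ^ (0:ℝ)
      * z.2 ^ ((-1)*q)) {z : ℝ × ℝ | 0 < z.1 ∧ z.1 < z.2 ∧ z.2 ≤ T} volume :=
    integrable_monomial hT (by norm_num) le_rfl (by norm_num) le_rfl
      (by nlinarith) (by norm_num; nlinarith)
  have hg2 : IntegrableOn (fun z : ℝ × ℝ => z.1 ^ ((H-1)*q) * (z.2 - z.1) ^ ((H-1)*q)
      * z.2 ^ (0:ℝ)) {z : ℝ × ℝ | 0 < z.1 ∧ z.1 < z.2 ∧ z.2 ≤ T} volume :=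
    integrable_monomial hT (by nlinarith) (by nlinarith) (by nlinarith) (by nlinarith)
      le_rfl (by nlinarith)
  have hg3 : IntegrableOn (fun z : ℝ × ℝ => z.1 ^ ((1-2*H)*q) * (z.2 - z.1) ^ (0:ℝ)
      * z.2 ^ ((2*H-2)*q)) {z : ℝ × ℝ | 0 < z.1 ∧ z.1 < z.2 ∧ z.2 ≤ T} volume :=
    integrable_monomial hT (by nlinarith) (by nlinarith) (by norm_num) le_rfl
      (by nlinarith) (by nlinarith)
  have hg4 : IntegrableOn (fun z : ℝ × ℝ => z.1 ^ ((1-2*H)*q) * (z.2 - z.1) ^ (0:ℝ)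
      * z.2 ^ (0:ℝ)) {z : ℝ × ℝ | 0 < z.1 ∧ z.1 < z.2 ∧ z.2 ≤ T} volume :=
    integrable_monomial hT (by nlinarith) (by nlinarith) (by norm_num) le_rfl
      le_rfl (by nlinarith)
  have hg5 : IntegrableOn (fun z : ℝ × ℝ => z.1 ^ (0:ℝ) * (z.2 - z.1) ^ ((2*H-2)*q)
      * z.2 ^ (0:ℝ)) {z : ℝ × ℝ | 0 < z.1 ∧ z.1 < z.2 ∧ z.2 ≤ T} volume :=
    integrable_monomial hT (by norm_num) le_rfl (by nlinarith) (by nlinarith)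
      le_rfl (by nlinarith)
  have hSm : MeasurableSet {z : ℝ × ℝ | 0 < z.1 ∧ z.1 < z.2 ∧ z.2 ≤ T} := by
    apply MeasurableSet.inter
    · exact measurableSet_lt measurable_const measurable_fst
    · apply MeasurableSet.inter
      · exact measurableSet_lt measurable_fst measurable_snd
      · exact measurableSet_le measurable_snd measurable_const
  have hGint : IntegrableOn (fun z : ℝ × ℝ =>
      (8:ℝ) ^ q * (z.1 ^ (0:ℝ) * (z.2 - z.1) ^ (0:ℝ) * z.2 ^ ((-1)*q)
        + z.1 ^ ((H-1)*q) * (z.2 - z.1) ^ ((H-1)*q) * z.2 ^ (0:ℝ)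
        + z.1 ^ ((1-2*H)*q) * (z.2 - z.1) ^ (0:ℝ) * z.2 ^ ((2*H-2)*q)
        + z.1 ^ ((1-2*H)*q) * (z.2 - z.1) ^ (0:ℝ) * z.2 ^ (0:ℝ)
        + z.1 ^ (0:ℝ) * (z.2 - z.1) ^ ((2*H-2)*q) * z.2 ^ (0:ℝ)))
      {z : ℝ × ℝ | 0 < z.1 ∧ z.1 < z.2 ∧ z.2 ≤ T} volume :=
    (((((hg1.add hg2).add hg3).add hg4).add hg5).const_mul _)
  apply Integrable.mono' hGint
  · apply AEStronglyMeasurable.restrict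
    apply Measurable.aestronglyMeasurable
    fun_prop
  · apply (ae_restrict_iff' hSm).2
    apply ae_of_all
    intro z hz
    obtain ⟨hs, hst, htT⟩ := hz
    set s := z.1
    set t := z.2
    have ht : 0 < t := hs.trans hst
    have hts : 0 < t - s := by linarith
    have hw : (0:ℝ) ≤ t⁻¹ := by positivity
    have hx : (0:ℝ) ≤ s ^ (H-1) * (t-s) ^ (H-1) := by positivity
    have hyv : (0:ℝ) ≤ s ^ (1-2*H) * (t ^ (2*H-2) + 1) := by positivity
    have hzv : (0:ℝ) ≤ (t-s) ^ (2*H-2) := by positivity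
    rw [Real.norm_of_nonneg (Real.rpow_nonneg (by positivity) _)]
    have hF4 := rpow_sum4_le hq0 hw hx hyv hzv
    -- term computations
    have e1 : (t⁻¹) ^ q = t ^ ((-1)*q) := by
      rw [← Real.rpow_neg_one t, ← Real.rpow_mul ht.le]
    have e2 : (s ^ (H-1) * (t-s) ^ (H-1)) ^ q = s ^ ((H-1)*q) * (t-s) ^ ((H-1)*q) := by
      rw [Real.mul_rpow (by positivity) (by positivity), ← Real.rpow_mul hs.le,
        ← Real.rpow_mul hts.le]
    have e4 : ((t-s) ^ (2*H-2)) ^ q = (t-s) ^ ((2*H-2)*q) := by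
      rw [← Real.rpow_mul hts.le]
    have e3 : (s ^ (1-2*H) * (t ^ (2*H-2) + 1)) ^ q
        ≤ s ^ ((1-2*H)*q) * (2 ^ q * (t ^ ((2*H-2)*q) + 1)) := by
      rw [Real.mul_rpow (by positivity) (by positivity), ← Real.rpow_mul hs.le]
      apply mul_le_mul_of_nonneg_left _ (Real.rpow_nonneg hs.le _)
      have := rpow_sum2_le hq0 (Real.rpow_nonneg ht.le (2*H-2))
      rwa [← Real.rpow_mul ht.le] at this
    rw [e1, e2, e4] at hF4
    have hF4' : (t⁻¹ + s ^ (H-1) * (t-s) ^ (H-1) + s ^ (1-2*H) * (t ^ (2*H-2) + 1)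
        + (t-s) ^ (2*H-2)) ^ q
        ≤ 4 ^ q * (t ^ ((-1)*q) + s ^ ((H-1)*q) * (t-s) ^ ((H-1)*q)
          + s ^ ((1-2*H)*q) * (2 ^ q * (t ^ ((2*H-2)*q) + 1)) + (t-s) ^ ((2*H-2)*q)) := by
      apply le_trans hF4
      apply mul_le_mul_of_nonneg_left _ (Real.rpow_nonneg (by norm_num) _)
      linarith only [e3]
    apply le_trans hF4'
    simp only [Real.rpow_zero, one_mul, mul_one]
    have c48 : (4:ℝ) ^ q ≤ 8 ^ q := Real.rpow_le_rpow (by norm_num) (by norm_num) hq0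
    have c8 : (4:ℝ) ^ q * 2 ^ q = 8 ^ q := by
      rw [← Real.mul_rpow (by norm_num) (by norm_num)]; norm_num
    have n1 : (0:ℝ) ≤ t ^ ((-1)*q) := by positivity
    have n2 : (0:ℝ) ≤ s ^ ((H-1)*q) * (t-s) ^ ((H-1)*q) := by positivity
    have n3 : (0:ℝ) ≤ s ^ ((1-2*H)*q) * t ^ ((2*H-2)*q) := by positivity
    have n3' : (0:ℝ) ≤ s ^ ((1-2*H)*q) := by positivity
    have n4 : (0:ℝ) ≤ (t-s) ^ ((2*H-2)*q) := by positivity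
    calc (4:ℝ) ^ q * (t ^ ((-1)*q) + s ^ ((H-1)*q) * (t-s) ^ ((H-1)*q)
          + s ^ ((1-2*H)*q) * (2 ^ q * (t ^ ((2*H-2)*q) + 1)) + (t-s) ^ ((2*H-2)*q))
        = 4 ^ q * t ^ ((-1)*q) + 4 ^ q * (s ^ ((H-1)*q) * (t-s) ^ ((H-1)*q))
          + (4 ^ q * 2 ^ q) * (s ^ ((1-2*H)*q) * t ^ ((2*H-2)*q))
          + (4 ^ q * 2 ^ q) * s ^ ((1-2*H)*q)
          + 4 ^ q * (t-s) ^ ((2*H-2)*q) := by ring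
      _ = 4 ^ q * t ^ ((-1)*q) + 4 ^ q * (s ^ ((H-1)*q) * (t-s) ^ ((H-1)*q))
          + 8 ^ q * (s ^ ((1-2*H)*q) * t ^ ((2*H-2)*q))
          + 8 ^ q * s ^ ((1-2*H)*q)
          + 4 ^ q * (t-s) ^ ((2*H-2)*q) := by rw [c8]
      _ ≤ 8 ^ q * t ^ ((-1)*q) + 8 ^ q * (s ^ ((H-1)*q) * (t-s) ^ ((H-1)*q))
          + 8 ^ q * (s ^ ((1-2*H)*q) * t ^ ((2*H-2)*q))
          + 8 ^ q * s ^ ((1-2*H)*q)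
          + 8 ^ q * (t-s) ^ ((2*H-2)*q) := by
          have l1 := mul_le_mul_of_nonneg_right c48 n1
          have l2 := mul_le_mul_of_nonneg_right c48 n2
          have l3 := mul_le_mul_of_nonneg_right c48 n4
          linarith only [l1, l2, l3]
      _ = 8 ^ q * (t ^ ((-1)*q) + s ^ ((H-1)*q) * (t-s) ^ ((H-1)*q)
          + s ^ ((1-2*H)*q) * t ^ ((2*H-2)*q) + s ^ ((1-2*H)*q)
          + (t-s) ^ ((2*H-2)*q)) := by ring

/-- There is `C = C(H,T)` such that for all `ε,δ ∈ (0,1)` and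
`(s,t) ∈ Δ_T`: `|ε⁻¹η₁₂(ε,s,t)| |δ⁻¹η₂₂(δ,s,t)| (t−s)^{2H} ≤ C (t⁻¹ + s^{H−1}(t−s)^{H−1}
+ s^{1−2H}(t^{2H−2}+1) + (t−s)^{2H−2})`, and the dominating function is in `L^q(Δ_T)` for
every `1 ≤ q < min{1/(2H−1), 1/(2−2H)}`. -/
theorem statement14 (H T : ℝ) (hH : H ∈ Set.Ioo (1/2 : ℝ) 1) (hT : 0 < T) :
    (∃ C : ℝ, 0 < C ∧ ∀ ε δ : ℝ, ε ∈ Set.Ioo (0:ℝ) 1 → δ ∈ Set.Ioo (0:ℝ) 1 →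
      ∀ s t : ℝ, 0 < s → s < t → t ≤ T →
      |ε⁻¹ * eta12 H ε s t| * |δ⁻¹ * eta22 H δ s t| * (t-s) ^ (2*H)
        ≤ C * (t⁻¹ + s ^ (H-1) * (t-s) ^ (H-1)
          + s ^ (1-2*H) * (t ^ (2*H-2) + 1) + (t-s) ^ (2*H-2))) ∧
    ∀ q : ℝ, 1 ≤ q → q < min (1/(2*H-1)) (1/(2-2*H)) →
      IntegrableOn (fun z : ℝ × ℝ =>
          (z.2⁻¹ + z.1 ^ (H-1) * (z.2-z.1) ^ (H-1)
            + z.1 ^ (1-2*H) * (z.2 ^ (2*H-2) + 1) + (z.2-z.1) ^ (2*H-2)) ^ q)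
        {z : ℝ × ℝ | 0 < z.1 ∧ z.1 < z.2 ∧ z.2 ≤ T} volume := by
  constructor
  · exact statement14_part1 hH hT
  · exact statement14_part2 hH hT
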